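/- arXiv:2512.05205 — 2 statements merged into one kernel-verified Lean document; each statement's English description precedes it below -/
import Mathlib

section
/- (Soundness of the constrained sampling procedure.) Let n be a positive integer, (w, C) ∈ ℤ^n × ℤ a linear constraint with w^T x^w ≤ C, and y ∈ {0,1}^n. Suppose that for every index i ∈ {1,...,n} with y_i ≠ x^w_i, the budget check holds: |w_i| ≤ (C − w^T x^w) − Σ_{k < i, y_k ≠ x^w_k} |w_k|. Then w^T y ≤ C. -/
/-!
Flipping bit `k` away from `x^w` raises the linear form by exactly `|w_k|`, so
`w^T y = w^T x^w + Σ_{y_k ≠ x^w_k} |w_k|`. The budget check at the last flipped index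
bounds that sum by the initial budget `C - w^T x^w`.
-/

open Finset

/-- A bit string of length `n`, encoded as an integer vector with entries in `{0,1}`. -/
def IsBitString {n : ℕ} (x : Fin n → ℤ) : Prop := ∀ i, x i = 0 ∨ x i = 1

/-- The bit string `x^w` minimizing the linear form: `x^w_i = 0` if `w_i ≥ 0`, else `1`. -/
def xw {n : ℕ} (w : Fin n → ℤ) : Fin n → ℤ := fun i => if 0 ≤ w i then 0 else 1

/-- The linear form `w^T x = Σ_k w_k x_k`. -/
def dotP {n : ℕ} (w x : Fin n → ℤ) : ℤ := ∑ k, w k * x k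

/-- The prefix relaxation `P_i^w(x) = Σ_{k=1}^i w_k x_k + Σ_{k=i+1}^n w_k x^w_k`
(indices of `Fin n` are 0-based, so `k ∈ {1,…,i}` corresponds to `(k : ℕ) < i`). -/
def prefixRelax {n : ℕ} (w x : Fin n → ℤ) (i : ℕ) : ℤ :=
  ∑ k ∈ Finset.univ.filter (fun k : Fin n => (k : ℕ) < i), w k * x k +
  ∑ k ∈ Finset.univ.filter (fun k : Fin n => i ≤ (k : ℕ)), w k * xw w k

theorem Finset.sum_le_of_forall_le_sub_sum_lt {α M : Type*} [LinearOrder α]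
    [AddCommGroup M] [LinearOrder M] [IsOrderedAddMonoid M]
    (S : Finset α) (f : α → M) {B : M} (hB : 0 ≤ B)
    (hstep : ∀ i ∈ S, f i ≤ B - ∑ k ∈ S with k < i, f k) :
    ∑ k ∈ S, f k ≤ B := by
  rcases S.eq_empty_or_nonempty with rfl | hS
  · simpa using hB
  · set m := S.max' hS
    have hm : m ∈ S := S.max'_mem hS
    have hbelow : S.filter (· < m) = S.erase m := by
      ext k
      simp only [mem_filter, mem_erase]
      exact ⟨fun ⟨hk, hlt⟩ => ⟨hlt.ne, hk⟩,
        fun ⟨hne, hk⟩ => ⟨hk, lt_of_le_of_ne (S.le_max' k hk) hne⟩⟩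
    have hlast := hstep m hm
    rw [hbelow] at hlast
    rw [← add_sum_erase S f hm]
    exact le_sub_iff_add_le.mp hlast

theorem mul_eq_mul_xw_add_abs {n : ℕ} (w y : Fin n → ℤ) (k : Fin n)
    (hy : y k = 0 ∨ y k = 1) :
    w k * y k = w k * xw w k + if y k ≠ xw w k then |w k| else 0 := by
  unfold xw
  rcases hy with h | h <;> split_ifs <;> simp_all [abs_of_nonneg, abs_of_neg]

theorem dotP_eq_dotP_xw_add_sum_abs {n : ℕ} (w y : Fin n → ℤ) (hy : IsBitString y) :
    dotP w y = dotP w (xw w) + ∑ k with y k ≠ xw w k, |w k| := by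
  rw [dotP, dotP, sum_filter, ← sum_add_distrib]
  exact sum_congr rfl fun k _ => mul_eq_mul_xw_add_abs w y k (hy k)

theorem sampling_sound_general (n : ℕ) (w : Fin n → ℤ) (C : ℤ)
    (hroot : dotP w (xw w) ≤ C)
    (y : Fin n → ℤ) (hy : IsBitString y)
    (hcheck : ∀ i : Fin n, y i ≠ xw w i →
      |w i| ≤ (C - dotP w (xw w)) -
        ∑ k ∈ Finset.univ.filter (fun k : Fin n => k < i ∧ y k ≠ xw w k), |w k|) :
    dotP w y ≤ C := by
  have hflips : ∑ k with y k ≠ xw w k, |w k| ≤ C - dotP w (xw w) := by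
    refine sum_le_of_forall_le_sub_sum_lt _ _ (sub_nonneg.mpr hroot) fun i hi => ?_
    rw [filter_filter]
    simp_rw [and_comm (a := _ ≠ _)]
    exact hcheck i (mem_filter.mp hi).2
  rw [dotP_eq_dotP_xw_add_sum_abs w y hy]
  linarith

/-- Soundness of the constrained sampling procedure: if
`w^T x^w ≤ C` and at every index where `y` flips away from `x^w` the budget
check `|w_i| ≤ (C - w^T x^w) - Σ_{k < i, y_k ≠ x^w_k} |w_k|` holds, then
`w^T y ≤ C`. -/
theorem sampling_sound (n : ℕ) (hn : 0 < n) (w : Fin n → ℤ) (C : ℤ)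
    (hroot : dotP w (xw w) ≤ C)
    (y : Fin n → ℤ) (hy : IsBitString y)
    (hcheck : ∀ i : Fin n, y i ≠ xw w i →
      |w i| ≤ (C - dotP w (xw w)) -
        ∑ k ∈ Finset.univ.filter (fun k : Fin n => k < i ∧ y k ≠ xw w k), |w k|) :
    dotP w y ≤ C :=
  sampling_sound_general n w C hroot y hy hcheck
end

section
/- (Completeness of the constrained sampling procedure.) Let n be a positive integer, (w, C) ∈ ℤ^n × ℤ a linear constraint, and y ∈ {0,1}^n with w^T y ≤ C. Then for every index i ∈ {1,...,n} with y_i ≠ x^w_i, the budget check holds: |w_i| ≤ (C − w^T x^w) − Σ_{k < i, y_k ≠ x^w_k} |w_k|. In particular, every feasible bit string passes all branching checks of the sampling procedure. -/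
/-!
Flipping bit `k` of `x^w` to the other value raises the linear form by exactly `|w_k|`, so
`w^T y - w^T x^w` is the sum of `|w_k|` over the indices where `y` differs from `x^w`. Feasibility
bounds this sum by `C - w^T x^w`, and the budget consumed before step `i` together with `|w_i|`
is a sub-sum of it.
-/

open Finset

lemma mul_sub_mul_xw_eq {n : ℕ} (w : Fin n → ℤ) (k : Fin n) {b : ℤ} (hb : b = 0 ∨ b = 1) :
    w k * b - w k * xw w k = if b ≠ xw w k then |w k| else 0 := by
  unfold xw
  by_cases hw : 0 ≤ w k
  · rcases hb with rfl | rfl <;> simp [hw, abs_of_nonneg hw]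
  · rcases hb with rfl | rfl <;> simp [hw, abs_of_neg (not_le.mp hw)]

lemma dotP_sub_dotP_xw {n : ℕ} (w y : Fin n → ℤ) (hy : IsBitString y) :
    dotP w y - dotP w (xw w) = ∑ k ∈ univ.filter (fun k => y k ≠ xw w k), |w k| := by
  rw [dotP, dotP, ← sum_sub_distrib, sum_filter]
  exact sum_congr rfl fun k _ => mul_sub_mul_xw_eq w k (hy k)

theorem sampling_complete_general (n : ℕ) (w : Fin n → ℤ) (C : ℤ)
    (y : Fin n → ℤ) (hy : IsBitString y) (hfeas : dotP w y ≤ C) :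
    ∀ i : Fin n, y i ≠ xw w i →
      |w i| ≤ (C - dotP w (xw w)) -
        ∑ k ∈ Finset.univ.filter (fun k : Fin n => k < i ∧ y k ≠ xw w k), |w k| := by
  intro i hi
  have hi_notMem : i ∉ univ.filter (fun k : Fin n => k < i ∧ y k ≠ xw w k) := by simp
  have hsubset : insert i (univ.filter (fun k : Fin n => k < i ∧ y k ≠ xw w k)) ⊆
      univ.filter (fun k => y k ≠ xw w k) := by
    intro k hk
    simp only [mem_insert, mem_filter, mem_univ, true_and] at hk ⊢
    rcases hk with rfl | ⟨_, hk⟩ <;> assumption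
  have hconsumed : |w i| + ∑ k ∈ univ.filter (fun k : Fin n => k < i ∧ y k ≠ xw w k), |w k| ≤
      dotP w y - dotP w (xw w) := by
    rw [dotP_sub_dotP_xw w y hy, ← sum_insert (f := fun k => |w k|) hi_notMem]
    exact sum_le_sum_of_subset_of_nonneg hsubset fun k _ _ => abs_nonneg _
  linarith

/-- Completeness of the constrained sampling procedure: if
`w^T y ≤ C`, then at every index where `y` flips away from `x^w` the budget
check `|w_i| ≤ (C - w^T x^w) - Σ_{k < i, y_k ≠ x^w_k} |w_k|` holds; i.e.
every feasible bit string passes all branching checks. -/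
theorem sampling_complete (n : ℕ) (hn : 0 < n) (w : Fin n → ℤ) (C : ℤ)
    (y : Fin n → ℤ) (hy : IsBitString y) (hfeas : dotP w y ≤ C) :
    ∀ i : Fin n, y i ≠ xw w i →
      |w i| ≤ (C - dotP w (xw w)) -
        ∑ k ∈ Finset.univ.filter (fun k : Fin n => k < i ∧ y k ≠ xw w k), |w k| :=
  sampling_complete_general n w C y hy hfeas
end
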